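/- arXiv:1912.13396 — 7 statements merged into one kernel-verified Lean document; each statement's English description precedes it below -/
import Mathlib

section
/- Rodrigues formula: for every n ∈ ℕ and x ≠ 0, eₙ(x) = x^{n+1} e^{−x} · (dⁿ/dxⁿ)(x^{−1} eˣ). -/
noncomputable def e (n : ℕ) (x : ℝ) : ℝ :=
  ∑ l ∈ Finset.range (n + 1), (-1 : ℝ) ^ (n + l) * ((n.factorial : ℝ) / (l.factorial : ℝ)) * x ^ l

/-!
By the Leibniz rule, with `(y⁻¹)⁽ᵏ⁾ = (-1)ᵏ k! y⁻¹⁻ᵏ` and `exp⁽ʲ⁾ = exp`,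
`(x⁻¹ eˣ)⁽ⁿ⁾ = eˣ ∑ₖ (n choose k) (-1)ᵏ k! x⁻¹⁻ᵏ`. Multiplying by `xⁿ⁺¹ e⁻ˣ` leaves
`∑ₖ (-1)ᵏ n!/(n-k)! xⁿ⁻ᵏ`, which is `eₙ(x)` after the reindexing `l = n - k`.
-/

open Finset Nat

theorem iteratedDeriv_inv_mul {𝕜 : Type*} [NontriviallyNormedField 𝕜] {f : 𝕜 → 𝕜} {x : 𝕜}
    {n : ℕ} (hx : x ≠ 0) (hf : ContDiffAt 𝕜 n f x) :
    iteratedDeriv n (fun y => y⁻¹ * f y) x = ∑ k ∈ range (n + 1),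
      n.choose k * ((-1) ^ k * k ! * x ^ (-1 - k : ℤ)) * iteratedDeriv (n - k) f x := by
  rw [show (fun y => y⁻¹ * f y) = Inv.inv * f from rfl,
    iteratedDeriv_mul (contDiffAt_inv 𝕜 hx) hf]
  simp only [iteratedDeriv_eq_iterate, iter_deriv_inv]

theorem pow_succ_mul_zpow_neg_one_sub {G₀ : Type*} [GroupWithZero G₀] {x : G₀} (hx : x ≠ 0)
    {n k : ℕ} (hk : k ≤ n) : x ^ (n + 1) * x ^ (-1 - k : ℤ) = x ^ (n - k) := by
  rw [← zpow_natCast, ← zpow_add₀ hx, ← zpow_natCast]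
  congr 1
  push_cast [hk]
  ring

theorem e_eq_sum_choose_mul_factorial (n : ℕ) (x : ℝ) :
    e n x = ∑ k ∈ range (n + 1), (-1) ^ k * (n.choose k * k ! : ℝ) * x ^ (n - k) := by
  rw [e, ← sum_range_reflect]
  refine sum_congr rfl fun k hk => ?_
  have hkn : k ≤ n := Nat.lt_succ_iff.mp (mem_range.mp hk)
  have hcoeff : (n.choose k * k ! : ℝ) = n ! / (n - k)! := by
    rw [eq_div_iff (by positivity), ← Nat.choose_mul_factorial_mul_factorial hkn]
    push_cast
    ring
  rw [add_tsub_cancel_right, hcoeff, show n + (n - k) = k + 2 * (n - k) by omega, pow_add,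
    pow_mul]
  norm_num

theorem stmt5 (n : ℕ) (x : ℝ) (hx : x ≠ 0) :
    e n x = x ^ (n + 1) * Real.exp (-x) *
      iteratedDeriv n (fun y => y⁻¹ * Real.exp y) x := by
  rw [iteratedDeriv_inv_mul hx Real.contDiff_exp.contDiffAt, e_eq_sum_choose_mul_factorial,
    mul_sum]
  refine sum_congr rfl fun k hk => ?_
  rw [iteratedDeriv_eq_iterate, Real.iter_deriv_exp,
    ← pow_succ_mul_zpow_neg_one_sub hx (Nat.lt_succ_iff.mp (mem_range.mp hk))]
  have hexp : Real.exp (-x) * Real.exp x = 1 := by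
    rw [← Real.exp_add, neg_add_cancel, Real.exp_zero]
  linear_combination -(-1) ^ k * (n.choose k * k ! : ℝ) * x ^ (n + 1) * x ^ (-1 - k : ℤ) * hexp
end

section
/- For n ∈ ℕ and x ≠ 0, the nth derivative of x^{−1} eˣ equals eˣ · Σ_{k=0}^{n} (−1)ᵏ (n!/(n−k)!) x^{−k−1}. -/
/-! Leibniz's rule: every derivative of `exp` is `exp`, the `k`-th derivative of `y⁻¹` is
`(-1)^k k! y^(-k-1)`, and `C(n, k) k! = n! / (n - k)!`. -/

open Nat Finset

theorem iteratedDeriv_inv {𝕜 : Type*} [NontriviallyNormedField 𝕜] (k : ℕ) (x : 𝕜) :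
    iteratedDeriv k Inv.inv x = (-1) ^ k * k ! * x ^ (-1 - k : ℤ) := by
  rw [iteratedDeriv_eq_iterate, iter_deriv_inv]

theorem Real.iteratedDeriv_mul_exp {f : ℝ → ℝ} {n : ℕ} {x : ℝ} (hf : ContDiffAt ℝ n f x) :
    iteratedDeriv n (fun y => f y * Real.exp y) x =
      Real.exp x * ∑ k ∈ range (n + 1), n.choose k * iteratedDeriv k f x := by
  rw [iteratedDeriv_fun_mul hf Real.contDiff_exp.contDiffAt, mul_sum]
  refine sum_congr rfl fun k _ => ?_
  rw [iteratedDeriv_eq_iterate (f := Real.exp), Real.iter_deriv_exp]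
  ring

theorem Nat.cast_choose_mul_factorial (K : Type*) [DivisionRing K] [CharZero K] {n k : ℕ}
    (hk : k ≤ n) : (n.choose k : K) * k ! = n ! / (n - k)! := by
  rw [eq_div_iff (Nat.cast_ne_zero.mpr (factorial_ne_zero _)), ← Nat.cast_mul, ← Nat.cast_mul,
    Nat.choose_mul_factorial_mul_factorial hk]

theorem stmt6 (n : ℕ) (x : ℝ) (hx : x ≠ 0) :
    iteratedDeriv n (fun y => y⁻¹ * Real.exp y) x =
      Real.exp x * ∑ k ∈ Finset.range (n + 1),
        (-1 : ℝ) ^ k * ((n.factorial : ℝ) / ((n - k).factorial : ℝ)) * x ^ (-(k : ℤ) - 1) := by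
  rw [Real.iteratedDeriv_mul_exp (contDiffAt_inv ℝ hx)]
  congr 1
  refine sum_congr rfl fun k hk => ?_
  rw [iteratedDeriv_inv, ← Nat.cast_choose_mul_factorial ℝ (Nat.lt_succ_iff.mp (mem_range.mp hk)),
    neg_sub_comm]
  ring
end

section
/- The polynomials sₙ defined by sₙ'' + sₙ = −xⁿ (with sₙ polynomial of degree n) satisfy sₙ(x) = (iⁿ/2)·[(−1)^{n+1} eₙ(ix) − eₙ(−ix)] for all real x, where eₙ are extended to ℂ. -/
/-!
The polynomial `eₙ` solves `eₙ' + eₙ = Xⁿ`, so for `a² = -1` the polynomial `eₙ(aX)` satisfies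
`f'' + f = aⁿ⁺¹ (Xⁿ)' + aⁿ Xⁿ`. In the combination of `a = i` and `a = -i` on the right-hand side
the `(Xⁿ)'` terms cancel and the `Xⁿ` terms add up to `-Xⁿ`. A polynomial solution of
`q'' + q = 0` vanishes, since `q = -q''` would have degree at most `deg q - 2`; hence the
complexification of `sₙ` equals that combination.
-/

noncomputable def eC (n : ℕ) (z : ℂ) : ℂ :=
  ∑ l ∈ Finset.range (n + 1), (-1 : ℂ) ^ (n + l) * ((n.factorial : ℂ) / (l.factorial : ℂ)) * z ^ l

open Polynomial

theorem eC_succ (n : ℕ) (z : ℂ) : eC (n + 1) z = z ^ (n + 1) - (n + 1) * eC n z := by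
  rw [eC, Finset.sum_range_succ, eC, Finset.mul_sum, sub_eq_neg_add, ← Finset.sum_neg_distrib]
  congr 1
  · refine Finset.sum_congr rfl fun l _ => ?_
    rw [Nat.factorial_succ]; push_cast; ring
  · rw [div_self (Nat.cast_ne_zero.2 (Nat.factorial_ne_zero _)), ← two_mul, pow_mul]; simp

section

variable {R : Type*} [CommRing R]

-- `eₙ`, defined by a recursion that avoids dividing by factorials.
noncomputable def ePoly : ℕ → R[X]
  | 0 => 1
  | n + 1 => X ^ (n + 1) - C ((n : R) + 1) * ePoly n

theorem derivative_ePoly_add_ePoly (n : ℕ) : derivative (ePoly n : R[X]) + ePoly n = X ^ n := by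
  induction n with
  | zero => simp [ePoly]
  | succ n ih =>
    rw [ePoly, derivative_sub, derivative_C_mul, derivative_X_pow, Nat.add_sub_cancel,
      Nat.cast_succ]
    linear_combination (-C ((n : R) + 1)) * ih

theorem derivative_ePoly_comp (n : ℕ) (a : R) :
    derivative ((ePoly n : R[X]).comp (C a * X))
      = C a * (C (a ^ n) * X ^ n - (ePoly n).comp (C a * X)) := by
  rw [derivative_comp, derivative_C_mul_X, eq_sub_of_add_eq (derivative_ePoly_add_ePoly n),
    sub_comp, X_pow_comp, mul_pow, ← C_pow]

theorem derivative_derivative_ePoly_comp_add {a : R} (ha : a ^ 2 = -1) (n : ℕ) :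
    derivative (derivative ((ePoly n : R[X]).comp (C a * X))) + (ePoly n).comp (C a * X)
      = C (a ^ (n + 1)) * derivative (X ^ n) + C (a ^ n) * X ^ n := by
  rw [derivative_ePoly_comp, derivative_mul, derivative_C, derivative_sub, derivative_ePoly_comp,
    derivative_C_mul, C_pow, C_pow]
  have hC : C a ^ 2 = -1 := by rw [← C_pow, ha, C_neg, C_1]
  linear_combination ((ePoly n).comp (C a * X) - C a ^ n * X ^ n) * hC

theorem eq_of_derivative_derivative_add_self_eq {p q : R[X]}
    (h : derivative (derivative p) + p = derivative (derivative q) + q) : p = q := by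
  set r := p - q
  have hr : r = -derivative (derivative r) := by
    simp only [r, derivative_sub]; linear_combination h
  have hdeg : r.natDegree = 0 := by
    have h1 := natDegree_derivative_le r
    have h2 := natDegree_derivative_le (derivative r)
    have h3 : r.natDegree = (derivative (derivative r)).natDegree := by
      conv_lhs => rw [hr]
      exact natDegree_neg _
    omega
  obtain ⟨c, hc⟩ := natDegree_eq_zero.mp hdeg
  have hr0 : r = 0 := by
    rw [← hc] at hr ⊢
    simpa using hr
  exact sub_eq_zero.mp hr0

theorem eval_ePoly (n : ℕ) (z : ℂ) : (ePoly n).eval z = eC n z := by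
  induction n with
  | zero => simp [ePoly, eC]
  | succ n ih => simp [ePoly, eC_succ, ih]

end

noncomputable def sPoly (n : ℕ) : ℂ[X] :=
  C (Complex.I ^ n / 2) * (C ((-1) ^ (n + 1)) * (ePoly n).comp (C Complex.I * X)
    - (ePoly n).comp (C (-Complex.I) * X))

theorem derivative_derivative_sPoly_add_sPoly (n : ℕ) :
    derivative (derivative (sPoly n)) + sPoly n = -X ^ n := by
  have hu := derivative_derivative_ePoly_comp_add Complex.I_sq n
  have hv := derivative_derivative_ePoly_comp_add (a := -Complex.I) (by simp) n
  rw [neg_pow, neg_pow Complex.I n, C_mul, C_mul] at hv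
  have hscalar : Complex.I ^ n / 2 * ((-1) ^ (n + 1) * Complex.I ^ n - (-1) ^ n * Complex.I ^ n)
      = -1 := by
    have hI : Complex.I ^ n * Complex.I ^ n = (-1) ^ n := by rw [← mul_pow, Complex.I_mul_I]
    have hsign : ((-1 : ℂ) ^ n) ^ 2 = 1 := by rw [← pow_mul, pow_mul', neg_one_sq, one_pow]
    linear_combination (-(-1) ^ n : ℂ) * hI - hsign
  have hscalarC := congrArg C hscalar
  simp only [map_mul, map_sub, map_neg, map_one] at hscalarC
  simp only [sPoly, derivative_mul, derivative_C, zero_mul, zero_add, derivative_sub]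
  linear_combination C (Complex.I ^ n / 2) * (C ((-1) ^ (n + 1)) * hu - hv) + X ^ n * hscalarC

theorem eval_sPoly (n : ℕ) (z : ℂ) : (sPoly n).eval z
    = Complex.I ^ n / 2 * ((-1) ^ (n + 1) * eC n (Complex.I * z) - eC n (-(Complex.I * z))) := by
  simp [sPoly, eval_ePoly]

open Polynomial in
theorem stmt12_general (n : ℕ) (p : ℝ[X])
    (hode : derivative (derivative p) + p = -(X ^ n)) (x : ℝ) :
    ((p.eval x : ℝ) : ℂ) = Complex.I ^ n / 2 *
      ((-1 : ℂ) ^ (n + 1) * eC n (Complex.I * x) - eC n (-(Complex.I * x))) := by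
  have hmap : p.map (algebraMap ℝ ℂ) = sPoly n := by
    apply eq_of_derivative_derivative_add_self_eq
    rw [derivative_derivative_sPoly_add_sPoly, derivative_map, derivative_map, ← Polynomial.map_add,
      hode]
    simp
  rw [← eval_sPoly, ← hmap, eval_map, ← Complex.coe_algebraMap, eval₂_at_apply]

open Polynomial in
theorem stmt12 (n : ℕ) (p : ℝ[X]) (hdeg : p.natDegree = n)
    (hode : derivative (derivative p) + p = -(X ^ n)) (x : ℝ) :
    ((p.eval x : ℝ) : ℂ) = Complex.I ^ n / 2 *
      ((-1 : ℂ) ^ (n + 1) * eC n (Complex.I * x) - eC n (-(Complex.I * x))) :=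
  stmt12_general n p hode x
end

section
/- For each n ∈ ℕ, the differential equation y'' + y = xⁿ has a unique polynomial solution cₙ, it has degree n, and cₙ(x) = −sₙ(x), where sₙ is the unique polynomial solution of y'' + y = −xⁿ. -/
open Polynomial

noncomputable def aux13 : ℕ → ℝ[X]
  | 0 => 1
  | 1 => X
  | (n+2) => X ^ (n+2) - C (((n:ℝ)+2)*((n:ℝ)+1)) * aux13 n

lemma aux13_sol : ∀ n : ℕ, derivative (derivative (aux13 n)) + aux13 n = X ^ n := by
  intro n
  induction n using Nat.twoStepInduction with
  | zero => simp [aux13]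
  | one => simp [aux13]
  | more n ih _ =>
    show derivative (derivative (X ^ (n+2) - C (((n:ℝ)+2)*((n:ℝ)+1)) * aux13 n)) +
      (X ^ (n+2) - C (((n:ℝ)+2)*((n:ℝ)+1)) * aux13 n) = X ^ (n+2)
    have e1 : n + 2 - 1 = n + 1 := by omega
    have e2 : n + 1 - 1 = n := by omega
    simp only [derivative_sub, derivative_C_mul, derivative_X_pow, e1, e2]
    simp only [Nat.cast_add, Nat.cast_ofNat, Nat.cast_one, map_add, map_mul, map_ofNat, map_one]
    linear_combination (-((C (n:ℝ) + 2) * (C (n:ℝ) + 1))) * ih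

lemma aux13_deg : ∀ n : ℕ, (aux13 n).natDegree = n := by
  intro n
  induction n using Nat.twoStepInduction with
  | zero => simp [aux13]
  | one => simp [aux13]
  | more n ih _ =>
    show (X ^ (n+2) - C (((n:ℝ)+2)*((n:ℝ)+1)) * aux13 n).natDegree = n + 2
    have h1 : (C (((n:ℝ)+2)*((n:ℝ)+1)) * aux13 n).natDegree < (X ^ (n+2) : ℝ[X]).natDegree := by
      rw [natDegree_X_pow]
      exact lt_of_le_of_lt ((natDegree_C_mul_le _ _).trans (le_of_eq ih)) (by omega)
    rw [natDegree_sub_eq_left_of_natDegree_lt h1, natDegree_X_pow]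

lemma uniq13 (p : ℝ[X]) (h : derivative (derivative p) + p = 0) : p = 0 := by
  by_contra hp
  have hpe : p = -derivative (derivative p) := eq_neg_of_add_eq_zero_right h
  by_cases h0 : p.natDegree = 0
  · have hd : derivative p = 0 := by
      rw [eq_C_of_natDegree_eq_zero h0]; simp
    rw [hd] at h; simp at h; exact hp h
  · have h2 : (derivative (derivative p)).natDegree < p.natDegree :=
      lt_of_le_of_lt
        ((natDegree_derivative_le _).trans (Nat.sub_le _ _))
        (natDegree_derivative_lt h0)
    have : p.natDegree < p.natDegree := by
      conv_lhs => rw [hpe]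
      rwa [natDegree_neg]
    exact lt_irrefl _ this

theorem stmt13 (n : ℕ) :
    (∃! c : ℝ[X], derivative (derivative c) + c = X ^ n) ∧
    ∀ c s : ℝ[X], derivative (derivative c) + c = X ^ n →
      derivative (derivative s) + s = -(X ^ n) →
      c.natDegree = n ∧ c = -s := by
  have key : ∀ c : ℝ[X], derivative (derivative c) + c = X ^ n → c = aux13 n := by
    intro c hc
    have h0 : derivative (derivative (c - aux13 n)) + (c - aux13 n) = 0 := by
      simp only [derivative_sub]
      linear_combination hc - aux13_sol n
    have := uniq13 _ h0
    exact sub_eq_zero.mp this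
  refine ⟨⟨aux13 n, aux13_sol n, fun y hy => key y hy⟩, ?_⟩
  intro c s hc hs
  have hcs : derivative (derivative (c + s)) + (c + s) = 0 := by
    simp only [derivative_add]
    linear_combination hc + hs
  refine ⟨by rw [key c hc]; exact aux13_deg n, ?_⟩
  have := uniq13 _ hcs
  linear_combination this
end

section
/- The generating function S(x,t) = −e^{xt}/(1+t²) satisfies ∂²S/∂x² + S = −e^{xt} for all real x and t, and equals Σ_{n=0}^{∞} (sₙ(x)/n!) tⁿ for |t| < 1, where sₙ is the unique polynomial solution of sₙ'' + sₙ = −xⁿ. -/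
noncomputable def S (x t : ℝ) : ℝ := -Real.exp (x * t) / (1 + t ^ 2)

/-!
Differentiating `S` in `x` multiplies it by `t`, so `∂²S/∂x² + S = (1 + t²) S = -e^{xt}`.

For the expansion, `y ↦ y'' + y` does not lower the degree of a nonzero polynomial, so polynomial
solutions are unique; hence `s₀ = -1`, `s₁ = -X` and `s_{n+2} = -X^{n+2} - (n+2)(n+1) sₙ`.
The coefficients `aₙ = sₙ(x)/n!` thus satisfy `a_{n+2} + aₙ = -x^{n+2}/(n+2)!`, which says
`(1 + t²) ∑ aₙ tⁿ = -∑ (xt)ⁿ/n! = -e^{xt}`; the bound `|aₙ| ≤ ∑_{k ≤ n} |x|ᵏ/k!` makes the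
series converge for `|t| < 1`.
-/

open Polynomial Finset

namespace Polynomial

variable {R : Type*}

theorem eq_zero_of_derivative_derivative_add_self_eq_zero [Semiring R] {q : R[X]}
    (h : derivative (derivative q) + q = 0) : q = 0 := by
  by_cases hq : q.natDegree = 0
  · rw [eq_C_of_natDegree_eq_zero hq] at h ⊢
    simpa using h
  · have hlt : (derivative (derivative q)).natDegree < q.natDegree :=
      (natDegree_derivative_le _).trans_lt ((Nat.sub_le _ _).trans_lt (natDegree_derivative_lt hq))
    have hcoeff := congrArg (coeff · q.natDegree) h
    simp only [coeff_add, coeff_eq_zero_of_natDegree_lt hlt, zero_add, coeff_zero] at hcoeff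
    exact leadingCoeff_eq_zero.1 hcoeff

theorem eq_of_derivative_derivative_add_self_eq [Ring R] {p q : R[X]}
    (h : derivative (derivative p) + p = derivative (derivative q) + q) : p = q :=
  sub_eq_zero.1 <| eq_zero_of_derivative_derivative_add_self_eq_zero <| by
    rw [derivative_sub, derivative_sub, ← sub_eq_zero.2 h]; abel

theorem derivative_derivative_X_pow_add_two [Semiring R] (n : ℕ) :
    derivative (derivative (X ^ (n + 2) : R[X])) = C ((n + 2 : R) * (n + 1)) * X ^ n := by
  rw [derivative_X_pow, derivative_C_mul, derivative_X_pow, C_mul]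
  push_cast
  simp [mul_assoc]

def IsNegXPowSolution [Ring R] (s : ℕ → R[X]) : Prop :=
  ∀ n, derivative (derivative (s n)) + s n = -X ^ n

namespace IsNegXPowSolution

theorem zero [Ring R] {s : ℕ → R[X]} (hs : IsNegXPowSolution s) : s 0 = -1 :=
  eq_of_derivative_derivative_add_self_eq <| by simp [hs 0]

theorem one [Ring R] {s : ℕ → R[X]} (hs : IsNegXPowSolution s) : s 1 = -X :=
  eq_of_derivative_derivative_add_self_eq <| by simp [hs 1]

theorem add_two [CommRing R] {s : ℕ → R[X]} (hs : IsNegXPowSolution s) (n : ℕ) :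
    s (n + 2) = -X ^ (n + 2) - C ((n + 2 : R) * (n + 1)) * s n :=
  eq_of_derivative_derivative_add_self_eq <| by
    simp only [derivative_sub, derivative_neg, derivative_C_mul, hs (n + 2),
      derivative_derivative_X_pow_add_two]
    linear_combination C ((n + 2 : R) * (n + 1)) * hs n

theorem eval_div_factorial_add_two [Field R] [CharZero R] {s : ℕ → R[X]}
    (hs : IsNegXPowSolution s) (x : R) (n : ℕ) :
    (s (n + 2)).eval x / (n + 2).factorial + (s n).eval x / n.factorial =
      -(x ^ (n + 2) / (n + 2).factorial) := by
  rw [hs.add_two, Nat.factorial_succ, Nat.factorial_succ]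
  simp only [eval_sub, eval_neg, eval_pow, eval_X, eval_mul, eval_C]
  have h0 : (n.factorial : R) ≠ 0 := Nat.cast_ne_zero.2 n.factorial_ne_zero
  have h2 : (n + 2 : R) ≠ 0 := by exact_mod_cast (n + 1).succ_ne_zero
  push_cast
  rw [add_assoc _ (1 : R) 1, one_add_one_eq_two]
  field_simp
  ring

end IsNegXPowSolution

end Polynomial

section TwoStepRecurrence

variable {a e : ℕ → ℝ}

theorem abs_le_sum_abs_of_add_two_eq (h0 : a 0 = e 0) (h1 : a 1 = e 1)
    (h : ∀ n, a (n + 2) + a n = e (n + 2)) (n : ℕ) :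
    |a n| ≤ ∑ k ∈ range (n + 1), |e k| := by
  induction n using Nat.twoStepInduction with
  | zero => simp [h0]
  | one => simp [sum_range_succ, h1]
  | more n ih _ =>
    calc |a (n + 2)| = |e (n + 2) - a n| := by rw [← h n, add_sub_cancel_right]
      _ ≤ |a n| + |e (n + 2)| := by rw [add_comm |a n|]; exact abs_sub _ _
      _ ≤ ∑ k ∈ range (n + 2 + 1), |e k| := by
        simp only [sum_range_succ] at ih ⊢
        linarith [abs_nonneg (e (n + 1))]

theorem hasSum_mul_pow_of_add_two_eq (h0 : a 0 = e 0) (h1 : a 1 = e 1)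
    (h : ∀ n, a (n + 2) + a n = e (n + 2)) (he : Summable fun n => |e n|) {t E : ℝ}
    (ht : |t| < 1) (hE : HasSum (fun n => e n * t ^ n) E) :
    HasSum (fun n => a n * t ^ n) (E / (1 + t ^ 2)) := by
  have ha : Summable fun n => a n * t ^ n := by
    refine .of_norm_bounded ((summable_geometric_of_lt_one (abs_nonneg t) ht).mul_left
      (∑' k, |e k|)) fun n => ?_
    rw [norm_mul, norm_pow, Real.norm_eq_abs, Real.norm_eq_abs]
    gcongr
    exact (abs_le_sum_abs_of_add_two_eq h0 h1 h n).trans (he.sum_le_tsum _ fun k _ => abs_nonneg _)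
  set A := ∑' n, a n * t ^ n
  have hshift : HasSum (fun n => e (n + 2) * t ^ (n + 2))
      (A - ∑ i ∈ range 2, a i * t ^ i + t ^ 2 * A) := by
    have hrec : (fun n => e (n + 2) * t ^ (n + 2)) =
        fun n => a (n + 2) * t ^ (n + 2) + t ^ 2 * (a n * t ^ n) :=
      funext fun n => by rw [← h n]; ring
    rw [hrec]
    exact ((hasSum_nat_add_iff' 2).2 ha.hasSum).add (ha.hasSum.mul_left (t ^ 2))
  have hEA : E = (1 + t ^ 2) * A := by
    refine hE.unique ?_
    convert hshift.sum_range_add (f := fun n => e n * t ^ n) (k := 2) using 1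
    simp only [sum_range_succ, sum_range_zero, h0, h1]
    ring
  rw [hEA, mul_div_cancel_left₀ _ (by positivity)]
  exact ha.hasSum

end TwoStepRecurrence

theorem hasDerivAt_S (x t : ℝ) : HasDerivAt (fun y => S y t) (t * S x t) x :=
  (((hasDerivAt_id x).mul_const t).exp.neg.div_const (1 + t ^ 2)).congr_deriv <| by
    simp only [S, id, one_mul]
    ring

theorem deriv_deriv_S_add_S (x t : ℝ) :
    deriv (deriv (fun y => S y t)) x + S x t = -Real.exp (x * t) := by
  have hderiv : deriv (fun y => S y t) = fun y => t * S y t :=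
    funext fun y => (hasDerivAt_S y t).deriv
  rw [hderiv, ((hasDerivAt_S x t).const_mul t).deriv, S]
  field_simp
  ring

theorem hasSum_neg_pow_div_factorial (x : ℝ) :
    HasSum (fun n => -(x ^ n / n.factorial)) (-Real.exp x) := by
  rw [Real.exp_eq_exp_ℝ]
  exact (NormedSpace.expSeries_div_hasSum_exp x).neg

open Polynomial in
theorem stmt15 :
    (∀ x t : ℝ, deriv (deriv (fun y => S y t)) x + S x t = -Real.exp (x * t)) ∧
    ∀ s : ℕ → ℝ[X], (∀ n, derivative (derivative (s n)) + s n = -(X ^ n)) →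
      ∀ x t : ℝ, |t| < 1 →
        S x t = ∑' n : ℕ, (s n).eval x / (n.factorial : ℝ) * t ^ n := by
  refine ⟨deriv_deriv_S_add_S, fun s (hs : IsNegXPowSolution s) x t ht => ?_⟩
  have hexp : HasSum (fun n => -(x ^ n / n.factorial) * t ^ n) (-Real.exp (x * t)) := by
    simpa only [mul_pow, neg_mul, div_mul_eq_mul_div] using hasSum_neg_pow_div_factorial (x * t)
  have habs : Summable fun n => |-(x ^ n / n.factorial)| := by
    simpa only [abs_neg, abs_div, abs_pow, Nat.abs_cast] using Real.summable_pow_div_factorial |x|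
  refine (hasSum_mul_pow_of_add_two_eq ?_ ?_ (hs.eval_div_factorial_add_two x) habs ht
    hexp).tsum_eq.symm
  · simp [hs.zero]
  · simp [hs.one]
end

section
/- Every solution y of the ODE x·y'' + (x − n)·y' − n·y = 0 on (0,∞) is of the form y(x) = C₁ e^{−x} + C₂ eₙ(x) for constants C₁, C₂. -/
/-!
With `v = y' + y` the equation reads `x v' = n v`, so `v = K xⁿ`. Since `eₙ' + eₙ = xⁿ`, the
difference `u = y - K eₙ` satisfies `u' + u = 0`, hence `u = C e⁻ˣ`.
-/

open Set Real

lemma e_zero : e 0 = fun _ => 1 := by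
  ext; simp [e]

lemma e_succ (n : ℕ) (x : ℝ) : e (n + 1) x = x ^ (n + 1) - (n + 1) * e n x := by
  have hlast : (-1 : ℝ) ^ (n + 1 + (n + 1)) * (((n + 1).factorial : ℝ) / ((n + 1).factorial : ℝ))
      * x ^ (n + 1) = x ^ (n + 1) := by
    rw [← two_mul, pow_mul, neg_one_sq, one_pow, div_self (by positivity), one_mul, one_mul]
  have hterm (l : ℕ) : (-1 : ℝ) ^ (n + 1 + l) * (((n + 1).factorial : ℝ) / (l.factorial : ℝ))
      * x ^ l = -((n + 1) * ((-1 : ℝ) ^ (n + l) * ((n.factorial : ℝ) / (l.factorial : ℝ)) * x ^ l)) := by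
    rw [Nat.factorial_succ, add_right_comm, pow_succ]
    push_cast
    ring
  rw [e, Finset.sum_range_succ, hlast, e, Finset.mul_sum,
    Finset.sum_congr rfl fun l _ => hterm l, Finset.sum_neg_distrib]
  ring

lemma hasDerivAt_e (n : ℕ) (x : ℝ) : HasDerivAt (e n) (x ^ n - e n x) x := by
  induction n with
  | zero => simpa [e_zero] using hasDerivAt_const x (1 : ℝ)
  | succ n ih =>
    rw [show e (n + 1) = fun t => t ^ (n + 1) - (n + 1) * e n t from funext (e_succ n)]
    refine ((hasDerivAt_pow (n + 1) x).sub (ih.const_mul ((n : ℝ) + 1))).congr_deriv ?_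
    simp only [Nat.add_sub_cancel, Nat.cast_succ]; ring

lemma IsOpen.exists_eq_const_of_hasDerivAt_zero {s : Set ℝ} (hs : IsOpen s)
    (hs' : IsPreconnected s) {f : ℝ → ℝ} (hf : ∀ x ∈ s, HasDerivAt f 0 x) :
    ∃ C, ∀ x ∈ s, f x = C :=
  hs.exists_is_const_of_deriv_eq_zero hs'
    (fun x hx => (hf x hx).differentiableAt.differentiableWithinAt)
    (fun x hx => (hf x hx).deriv)

lemma IsOpen.exists_eq_mul_exp_neg_of_hasDerivAt {s : Set ℝ} (hs : IsOpen s)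
    (hs' : IsPreconnected s) {u u' : ℝ → ℝ} (hu : ∀ x ∈ s, HasDerivAt u (u' x) x)
    (hode : ∀ x ∈ s, u' x + u x = 0) : ∃ C, ∀ x ∈ s, u x = C * exp (-x) := by
  obtain ⟨C, hC⟩ := hs.exists_eq_const_of_hasDerivAt_zero hs' (f := fun x => u x * exp x)
    fun x hx => ((hu x hx).mul (hasDerivAt_exp x)).congr_deriv <| by
      rw [← add_mul, hode x hx, zero_mul]
  refine ⟨C, fun x hx => ?_⟩
  rw [← hC x hx, mul_assoc, ← exp_add, add_neg_cancel, exp_zero, mul_one]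

lemma exists_eq_mul_rpow_of_hasDerivAt {r : ℝ} {v v' : ℝ → ℝ}
    (hv : ∀ x ∈ Ioi (0 : ℝ), HasDerivAt v (v' x) x)
    (hode : ∀ x ∈ Ioi (0 : ℝ), x * v' x = r * v x) :
    ∃ K, ∀ x ∈ Ioi (0 : ℝ), v x = K * x ^ r := by
  obtain ⟨K, hK⟩ := isOpen_Ioi.exists_eq_const_of_hasDerivAt_zero isPreconnected_Ioi
    (f := fun x => v x * x ^ (-r)) fun x (hx : 0 < x) =>
      ((hv x hx).mul (hasDerivAt_rpow_const (p := -r) (Or.inl hx.ne'))).congr_deriv <| by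
        rw [rpow_sub hx, rpow_one]
        field_simp
        linear_combination (x ^ (-r)) * hode x hx
  refine ⟨K, fun x (hx : 0 < x) => ?_⟩
  rw [← hK x hx, mul_assoc, ← rpow_add hx, neg_add_cancel, rpow_zero, mul_one]

theorem stmt16 (n : ℕ) (y : ℝ → ℝ)
    (hy : ∀ x ∈ Set.Ioi (0 : ℝ), DifferentiableAt ℝ y x ∧ DifferentiableAt ℝ (deriv y) x)
    (hode : ∀ x ∈ Set.Ioi (0 : ℝ),
      x * deriv (deriv y) x + (x - (n : ℝ)) * deriv y x - (n : ℝ) * y x = 0) :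
    ∃ C₁ C₂ : ℝ, ∀ x ∈ Set.Ioi (0 : ℝ), y x = C₁ * Real.exp (-x) + C₂ * e n x := by
  have hv (x : ℝ) (hx : x ∈ Ioi 0) :
      HasDerivAt (fun t => deriv y t + y t) (deriv (deriv y) x + deriv y x) x :=
    (hy x hx).2.hasDerivAt.add (hy x hx).1.hasDerivAt
  obtain ⟨K, hK⟩ := exists_eq_mul_rpow_of_hasDerivAt (r := n) hv
    fun x hx => by linear_combination hode x hx
  have hu (x : ℝ) (hx : x ∈ Ioi 0) :
      HasDerivAt (fun t => y t - K * e n t) (deriv y x - K * (x ^ n - e n x)) x :=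
    (hy x hx).1.hasDerivAt.sub ((hasDerivAt_e n x).const_mul K)
  obtain ⟨C, hC⟩ := isOpen_Ioi.exists_eq_mul_exp_neg_of_hasDerivAt isPreconnected_Ioi hu
    fun x hx => by rw [← rpow_natCast]; linear_combination hK x hx
  exact ⟨C, K, fun x hx => by linear_combination hC x hx⟩
end

section
/- Generalized Rodrigues formula: for m ≠ 0, n ∈ ℕ and x ≠ 0, eₙ^{(m)}(x) = x^{n+1} e^{−mx} · (dⁿ/dxⁿ)(x^{−1} e^{mx}). -/
noncomputable def epoly (n : ℕ) (m : ℝ) (x : ℝ) : ℝ :=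
  ∑ l ∈ Finset.range (n + 1),
    (-1 : ℝ) ^ (n + l) * m ^ l * ((n.factorial : ℝ) / (l.factorial : ℝ)) * x ^ l

/-!
By the Leibniz rule, `dⁿ/dxⁿ (x⁻¹ e^{mx}) = ∑ₖ C(n,k) (-1)ᵏ k! x^{-1-k} m^{n-k} e^{mx}`.
Multiplying by `x^{n+1} e^{-mx}` leaves `∑ₖ (-1)ᵏ n!/(n-k)! m^{n-k} x^{n-k}`, which is `eₙ^{(m)}(x)`
after the substitution `l = n - k`.
-/

open Finset Real Nat

theorem iteratedDeriv_inv_mul_exp_const_mul (n : ℕ) (m : ℝ) {x : ℝ} (hx : x ≠ 0) :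
    iteratedDeriv n (fun y => y⁻¹ * exp (m * y)) x = ∑ k ∈ range (n + 1),
      n.choose k * ((-1) ^ k * k ! * x ^ (-1 - k : ℤ)) * (m ^ (n - k) * exp (m * x)) := by
  have hexp : ContDiff ℝ n fun y => exp (m * y) := by fun_prop
  rw [iteratedDeriv_fun_mul (contDiffAt_inv ℝ hx) hexp.contDiffAt]
  simp only [iteratedDeriv_exp_const_mul]
  simp only [iteratedDeriv_eq_iterate, iter_deriv_inv]

theorem epoly_eq_sum_descFactorial (n : ℕ) (m x : ℝ) :
    epoly n m x =
      ∑ k ∈ range (n + 1), (-1) ^ k * n.descFactorial k * m ^ (n - k) * x ^ (n - k) := by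
  rw [epoly, ← sum_range_reflect]
  refine sum_congr rfl fun k hk => ?_
  have hkn : k ≤ n := Nat.lt_succ_iff.mp (mem_range.mp hk)
  have hfac : (n ! : ℝ) / (n - k)! = n.descFactorial k := by
    rw [div_eq_iff (by positivity), ← Nat.factorial_mul_descFactorial hkn]
    push_cast
    ring
  rw [add_tsub_cancel_right, hfac, show n + (n - k) = k + 2 * (n - k) by omega, pow_add,
    pow_mul, neg_one_sq, one_pow, mul_one]
  ring

theorem stmt18_general (n : ℕ) (m : ℝ) (x : ℝ) (hx : x ≠ 0) :
    epoly n m x = x ^ (n + 1) * Real.exp (-(m * x)) *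
      iteratedDeriv n (fun y => y⁻¹ * Real.exp (m * y)) x := by
  rw [iteratedDeriv_inv_mul_exp_const_mul n m hx, epoly_eq_sum_descFactorial, mul_sum]
  refine sum_congr rfl fun k hk => ?_
  have hkn : k ≤ n := Nat.lt_succ_iff.mp (mem_range.mp hk)
  have hpow : x ^ (n + 1) * x ^ (-1 - k : ℤ) = x ^ (n - k) := by
    rw [← zpow_natCast, ← zpow_add₀ hx, ← zpow_natCast]
    congr 1
    omega
  rw [Nat.descFactorial_eq_factorial_mul_choose, exp_neg]
  calc _ = (-1) ^ k * (k ! * n.choose k : ℕ) * m ^ (n - k) * (x ^ (n + 1) * x ^ (-1 - k : ℤ)) *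
        ((exp (m * x))⁻¹ * exp (m * x)) := by
        rw [hpow, inv_mul_cancel₀ (exp_ne_zero _), mul_one]
    _ = _ := by
        push_cast
        ring

theorem stmt18 (n : ℕ) (m : ℝ) (hm : m ≠ 0) (x : ℝ) (hx : x ≠ 0) :
    epoly n m x = x ^ (n + 1) * Real.exp (-(m * x)) *
      iteratedDeriv n (fun y => y⁻¹ * Real.exp (m * y)) x :=
  stmt18_general n m x hx
end
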